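/- Let μ and μ' be probability distributions on {1,2,…} with the same finite mean, and assume μ' is supported on {ℓ, ℓ+1} for some ℓ ≥ 1. Let ν have law μ and ν' have law μ', and write R_ν (resp. R_{ν'}) for the (random) number of heaps when item i₀ is given ν (resp. ν') lives while every other item i keeps its fixed v_i lives. Then E[R_{ν'}] ≤ E[R_ν]. -/

import Mathlib

/-!
Let `f m` be the number of trees when item `i₀` has `m` lives, and run the algorithm with `m`,
`m + 1` and `m + 2` lives side by side. Once `i₀` is processed the runs differ only by surplus
lives. At every later step a surplus life stays on its particle, or slides down to the parent
that the new item picks in the run without it, or is used by an item that would otherwise have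
started a new tree. The surplus life of the `m + 1` run never sits above that of the `m + 2` run,
and a surplus life at `q` is used only by an item above `q` that sees no other alive particle
below it; so the first surplus life is used no later than the second, i.e. `f` is nonincreasing
and convex. A convex `f` on `ℕ` lies above its secant through `ℓ` and `ℓ + 1` and agrees with it
there; the secant is affine and the two laws have the same mean, so
`E f(ν') = E secant(ν') = E secant(ν) ≤ E f(ν)`.
-/

open MeasureTheory ProbabilityTheory Filter Topology
open scoped ENNReal NNReal

namespace HeapPatience

/-- Decrement by one the number of lives of the (first) alive particle with label `x`. -/
noncomputable def decrementAt : List (ℝ × ℕ) → ℝ → List (ℝ × ℕ)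
  | [], _ => []
  | p :: rest, x =>
      if p.1 = x ∧ 0 < p.2 then (p.1, p.2 - 1) :: rest else p :: decrementAt rest x

/-- One step of the heap patience sorting algorithm, where `acc = (state, number of roots)`:
the new item is attached as a child of the alive particle (a particle with at least one
remaining life) having the largest label smaller than the label of the item, and that
particle loses one life; if there is no such particle, a new root (tree) is created. -/
noncomputable def step (acc : List (ℝ × ℕ) × ℕ) (item : ℝ × ℕ) : List (ℝ × ℕ) × ℕ :=
  match (acc.1.filter fun p => decide (0 < p.2 ∧ p.1 < item.1)).argmax Prod.fst with
  | none => (item :: acc.1, acc.2 + 1)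
  | some q => (item :: decrementAt acc.1 q.1, acc.2)

/-- Run the heap patience sorting algorithm on the items `(label, lives)` in order; returns
the final state (the particles with their remaining lives) and the number of roots created. -/
noncomputable def run (items : List (ℝ × ℕ)) : List (ℝ × ℕ) × ℕ :=
  items.foldl step ([], 0)

/-- `R items` : the number of heaps (trees) produced by the heap patience sorting
algorithm applied to the finite sequence `items` of pairs `(label, number of lives)`. -/
noncomputable def R (items : List (ℝ × ℕ)) : ℕ := (run items).2

/-- `D items` : after running the algorithm, the number of dead particles whose label is
smaller than the label of every alive particle, i.e. the number of leading zeros of the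
label-ordered vector of remaining lives. -/
noncomputable def D (items : List (ℝ × ℕ)) : ℕ :=
  ((run items).1.filter fun p =>
      decide (p.2 = 0 ∧ ∀ q ∈ (run items).1, 0 < q.2 → p.1 < q.1)).length

/-- `Rn U ν n ω` : the random number of heaps `𝐑(n)` needed to sort the first `n`
random items `(U i ω, ν i ω)`. -/
noncomputable def Rn {Ω : Type} (U : ℕ → Ω → ℝ) (ν : ℕ → Ω → ℕ) (n : ℕ) (ω : Ω) : ℕ :=
  R ((List.range n).map fun i => (U i ω, ν i ω))

/-- `Dn U ν n ω` : the random variable `D_n`, the number of dead items whose label is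
smaller than the label of every alive item after sorting the first `n` random items. -/
noncomputable def Dn {Ω : Type} (U : ℕ → Ω → ℝ) (ν : ℕ → Ω → ℕ) (n : ℕ) (ω : Ω) : ℕ :=
  D ((List.range n).map fun i => (U i ω, ν i ω))

/-- The uniform probability measure on the interval `(0,1)`. -/
noncomputable def unif01 : Measure ℝ := volume.restrict (Set.Ioo 0 1)

noncomputable def addLife : List (ℝ × ℕ) → ℝ → List (ℝ × ℕ)
  | [], _ => []
  | p :: rest, q => if p.1 = q then (p.1, p.2 + 1) :: rest else p :: addLife rest q

def AliveBelow (s : List (ℝ × ℕ)) (x c : ℝ) : Prop :=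
  ∃ l, (c, l) ∈ s ∧ 0 < l ∧ c < x

section Particles

variable {s : List (ℝ × ℕ)} {c q : ℝ} {l : ℕ}

lemma map_fst_decrementAt (s : List (ℝ × ℕ)) (c : ℝ) :
    (decrementAt s c).map Prod.fst = s.map Prod.fst := by
  induction s with
  | nil => rfl
  | cons a rest ih => by_cases h : a.1 = c ∧ 0 < a.2 <;> simp [decrementAt, h, ih]

lemma map_fst_addLife (s : List (ℝ × ℕ)) (q : ℝ) :
    (addLife s q).map Prod.fst = s.map Prod.fst := by
  induction s with
  | nil => rfl
  | cons a rest ih => by_cases h : a.1 = q <;> simp [addLife, h, ih]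

lemma addLife_cons_of_ne {p : ℝ × ℕ} (h : p.1 ≠ q) (s : List (ℝ × ℕ)) :
    addLife (p :: s) q = p :: addLife s q := by
  rw [addLife, if_neg h]

lemma mem_addLife_of_ne {p : ℝ × ℕ} (hp : p ∈ s) (h : p.1 ≠ q) : p ∈ addLife s q := by
  induction s with
  | nil => simp at hp
  | cons a rest ih =>
    rcases List.mem_cons.1 hp with rfl | hp
    · simp [addLife, h]
    · by_cases ha : a.1 = q <;> simp [addLife, ha, ih hp, hp]

lemma mem_of_mem_addLife_of_ne {p : ℝ × ℕ} (hp : p ∈ addLife s q) (h : p.1 ≠ q) : p ∈ s := by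
  induction s with
  | nil => simp [addLife] at hp
  | cons a rest ih =>
    by_cases ha : a.1 = q
    · rw [addLife, if_pos ha] at hp
      rcases List.mem_cons.1 hp with rfl | hp
      · exact absurd ha h
      · exact List.mem_cons_of_mem _ hp
    · rw [addLife_cons_of_ne ha] at hp
      rcases List.mem_cons.1 hp with rfl | hp
      · exact List.mem_cons_self
      · exact List.mem_cons_of_mem _ (ih hp)

lemma mem_addLife_self (hnd : (s.map Prod.fst).Nodup) (h : (q, l) ∈ s) :
    (q, l + 1) ∈ addLife s q := by
  induction s with
  | nil => simp at h
  | cons a rest ih =>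
    rw [List.map_cons, List.nodup_cons] at hnd
    rcases List.mem_cons.1 h with rfl | h
    · simp [addLife]
    · have ha : a.1 ≠ q := fun ha => hnd.1 (ha ▸ List.mem_map_of_mem h)
      rw [addLife_cons_of_ne ha]
      exact List.mem_cons_of_mem _ (ih hnd.2 h)

lemma decrementAt_addLife_self (s : List (ℝ × ℕ)) (q : ℝ) : decrementAt (addLife s q) q = s := by
  induction s with
  | nil => rfl
  | cons a rest ih =>
    obtain ⟨a, k⟩ := a
    by_cases h : a = q
    · subst h
      simp [addLife, decrementAt]
    · rw [addLife_cons_of_ne h, decrementAt, if_neg (fun hc => h hc.1), ih]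

lemma addLife_decrementAt_self (hnd : (s.map Prod.fst).Nodup) (h : (c, l) ∈ s) (hl : 0 < l) :
    addLife (decrementAt s c) c = s := by
  induction s with
  | nil => simp at h
  | cons a rest ih =>
    rw [List.map_cons, List.nodup_cons] at hnd
    rcases List.mem_cons.1 h with rfl | h
    · simp [decrementAt, addLife, hl, Nat.sub_add_cancel hl]
    · have ha : a.1 ≠ c := fun ha => hnd.1 (ha ▸ List.mem_map_of_mem h)
      rw [decrementAt, if_neg (fun hc => ha hc.1), addLife_cons_of_ne ha, ih hnd.2 h]

lemma decrementAt_addLife_of_ne (h : c ≠ q) (s : List (ℝ × ℕ)) :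
    decrementAt (addLife s q) c = addLife (decrementAt s c) q := by
  induction s with
  | nil => rfl
  | cons a rest ih =>
    by_cases haq : a.1 = q
    · simp [addLife, decrementAt, haq, h.symm]
    · by_cases hac : a.1 = c ∧ 0 < a.2
      · simp [decrementAt, hac, addLife, h]
      · simp [addLife_cons_of_ne haq, decrementAt, hac, ih]

lemma decrementAt_addLife (hnd : (s.map Prod.fst).Nodup) (h : (c, l) ∈ s) (hl : 0 < l) (q : ℝ) :
    decrementAt (addLife s q) c = addLife (decrementAt s c) q := by
  by_cases hcq : c = q
  · subst hcq
    rw [decrementAt_addLife_self, addLife_decrementAt_self hnd h hl]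
  · exact decrementAt_addLife_of_ne hcq s

lemma aliveBelow_addLife_iff (hnd : (s.map Prod.fst).Nodup) (hq : q ∈ s.map Prod.fst) (x : ℝ) :
    AliveBelow (addLife s q) x c ↔ AliveBelow s x c ∨ (c = q ∧ q < x) := by
  obtain ⟨⟨q, lq⟩, hqs, rfl⟩ := List.mem_map.1 hq
  constructor
  · rintro ⟨l, hl, hpos, hlt⟩
    by_cases hcq : c = q
    · exact Or.inr ⟨hcq, hcq ▸ hlt⟩
    · exact Or.inl ⟨l, mem_of_mem_addLife_of_ne hl hcq, hpos, hlt⟩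
  · rintro (⟨l, hl, hpos, hlt⟩ | ⟨rfl, hlt⟩)
    · by_cases hcq : c = q
      · subst hcq
        exact ⟨lq + 1, mem_addLife_self hnd hqs, lq.succ_pos, hlt⟩
      · exact ⟨l, mem_addLife_of_ne hl hcq, hpos, hlt⟩
    · exact ⟨lq + 1, mem_addLife_self hnd hqs, lq.succ_pos, hlt⟩

end Particles

section Step

variable {s : List (ℝ × ℕ)} {r : ℕ} {x : ℝ × ℕ}

lemma step_spec (s : List (ℝ × ℕ)) (r : ℕ) (x : ℝ × ℕ) :
    ((∀ c, ¬ AliveBelow s x.1 c) ∧ step (s, r) x = (x :: s, r + 1)) ∨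
      ∃ c, IsGreatest {c | AliveBelow s x.1 c} c ∧ step (s, r) x = (x :: decrementAt s c, r) := by
  rcases h : (s.filter fun p => decide (0 < p.2 ∧ p.1 < x.1)).argmax Prod.fst with _ | ⟨c, l⟩
  · refine Or.inl ⟨fun c ⟨l, hl, hpos, hlt⟩ => ?_, by simp only [step, h]⟩
    rw [List.argmax_eq_none, List.filter_eq_nil_iff] at h
    simpa [hpos, hlt] using h _ hl
  · have hmem := List.mem_filter.1 (List.argmax_mem h)
    refine Or.inr ⟨c, ⟨⟨l, hmem.1, by simpa using hmem.2⟩, fun c' ⟨l', hl', hpos, hlt⟩ => ?_⟩,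
      by simp only [step, h]⟩
    exact List.le_of_mem_argmax (List.mem_filter.2 ⟨hl', by simpa using ⟨hpos, hlt⟩⟩) h

lemma step_eq_root (h : ∀ c, ¬ AliveBelow s x.1 c) : step (s, r) x = (x :: s, r + 1) := by
  rcases step_spec s r x with ⟨-, hstep⟩ | ⟨c, hc, -⟩
  · exact hstep
  · exact absurd hc.1 (h c)

lemma step_eq_attach {c : ℝ} (hc : IsGreatest {c | AliveBelow s x.1 c} c) :
    step (s, r) x = (x :: decrementAt s c, r) := by
  rcases step_spec s r x with ⟨h, -⟩ | ⟨c', hc', hstep⟩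
  · exact absurd hc.1 (h c)
  · rwa [hc'.unique hc] at hstep

lemma map_fst_step (acc : List (ℝ × ℕ) × ℕ) (x : ℝ × ℕ) :
    (step acc x).1.map Prod.fst = x.1 :: acc.1.map Prod.fst := by
  rcases step_spec acc.1 acc.2 x with ⟨-, h⟩ | ⟨c, -, h⟩ <;> simp [h, map_fst_decrementAt]

lemma step_add_roots (s : List (ℝ × ℕ)) (r k : ℕ) (x : ℝ × ℕ) :
    step (s, r + k) x = ((step (s, r) x).1, (step (s, r) x).2 + k) := by
  rcases step_spec s r x with ⟨h, -⟩ | ⟨c, hc, -⟩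
  · rw [step_eq_root h, step_eq_root h]
    simp only [Prod.mk.injEq, true_and]
    omega
  · rw [step_eq_attach hc, step_eq_attach hc]

end Step

section StepAddLife

variable {s : List (ℝ × ℕ)} {r : ℕ} {x : ℝ × ℕ} {q c : ℝ}

lemma step_addLife_of_root_of_lt (hnd : (s.map Prod.fst).Nodup) (hq : q ∈ s.map Prod.fst)
    (h₀ : ∀ c, ¬ AliveBelow s x.1 c) (hqx : q < x.1) :
    step (addLife s q, r) x = (x :: s, r) := by
  have hmax : IsGreatest {c | AliveBelow (addLife s q) x.1 c} q := by
    refine ⟨(aliveBelow_addLife_iff hnd hq x.1).2 (Or.inr ⟨rfl, hqx⟩), fun c hc => ?_⟩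
    rcases (aliveBelow_addLife_iff hnd hq x.1).1 hc with hc | ⟨rfl, -⟩
    · exact absurd hc (h₀ c)
    · exact le_rfl
  rw [step_eq_attach hmax, decrementAt_addLife_self]

lemma step_addLife_of_root_of_gt (hnd : (s.map Prod.fst).Nodup) (hq : q ∈ s.map Prod.fst)
    (h₀ : ∀ c, ¬ AliveBelow s x.1 c) (hxq : x.1 < q) :
    step (addLife s q, r) x = (addLife (x :: s) q, r + 1) := by
  have h₀' : ∀ c, ¬ AliveBelow (addLife s q) x.1 c := fun c hc => by
    rcases (aliveBelow_addLife_iff hnd hq x.1).1 hc with hc | ⟨-, hqx⟩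
    · exact h₀ c hc
    · exact hqx.not_gt hxq
  rw [step_eq_root h₀', addLife_cons_of_ne hxq.ne]

lemma step_addLife_of_attach_of_lt (hnd : (s.map Prod.fst).Nodup) (hq : q ∈ s.map Prod.fst)
    (hc : IsGreatest {c | AliveBelow s x.1 c} c) (hcq : c < q) (hqx : q < x.1) :
    step (addLife s q, r) x = (addLife (x :: decrementAt s c) c, r) := by
  have hmax : IsGreatest {c | AliveBelow (addLife s q) x.1 c} q := by
    refine ⟨(aliveBelow_addLife_iff hnd hq x.1).2 (Or.inr ⟨rfl, hqx⟩), fun c' hc' => ?_⟩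
    rcases (aliveBelow_addLife_iff hnd hq x.1).1 hc' with hc' | ⟨rfl, -⟩
    · exact (hc.2 hc').trans hcq.le
    · exact le_rfl
  obtain ⟨l, hcl, hl, hcx⟩ := hc.1
  rw [step_eq_attach hmax, decrementAt_addLife_self, addLife_cons_of_ne hcx.ne',
    addLife_decrementAt_self hnd hcl hl]

lemma step_addLife_of_attach (hnd : (s.map Prod.fst).Nodup) (hq : q ∈ s.map Prod.fst)
    (hx : x.1 ∉ s.map Prod.fst) (hc : IsGreatest {c | AliveBelow s x.1 c} c)
    (hqc : q < x.1 → q ≤ c) :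
    step (addLife s q, r) x = (addLife (x :: decrementAt s c) q, r) := by
  have hmax : IsGreatest {c | AliveBelow (addLife s q) x.1 c} c := by
    refine ⟨(aliveBelow_addLife_iff hnd hq x.1).2 (Or.inl hc.1), fun c' hc' => ?_⟩
    rcases (aliveBelow_addLife_iff hnd hq x.1).1 hc' with hc' | ⟨rfl, hqx⟩
    · exact hc.2 hc'
    · exact hqc hqx
  obtain ⟨l, hcl, hl, -⟩ := hc.1
  rw [step_eq_attach hmax, decrementAt_addLife hnd hcl hl,
    addLife_cons_of_ne (fun h => hx (h ▸ hq))]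

end StepAddLife

def ExtraLifeAt (q : ℝ) (acc acc' : List (ℝ × ℕ) × ℕ) : Prop :=
  q ∈ acc.1.map Prod.fst ∧ acc' = (addLife acc.1 q, acc.2)

def OneRootFewer (acc acc' : List (ℝ × ℕ) × ℕ) : Prop :=
  acc'.1 = acc.1 ∧ acc.2 = acc'.2 + 1

def PairCoupling (acc acc' : List (ℝ × ℕ) × ℕ) : Prop :=
  (∃ q, ExtraLifeAt q acc acc') ∨ OneRootFewer acc acc'

def TripleCoupling (A B C : List (ℝ × ℕ) × ℕ) : Prop :=
  (∃ q₁ q₂, q₁ ≤ q₂ ∧ ExtraLifeAt q₁ A B ∧ ExtraLifeAt q₂ B C) ∨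
    (OneRootFewer A B ∧ PairCoupling B C)

section Coupling

variable {acc acc' A B C : List (ℝ × ℕ) × ℕ} {x : ℝ × ℕ} {q : ℝ}

lemma ExtraLifeAt.map_fst (h : ExtraLifeAt q acc acc') :
    acc'.1.map Prod.fst = acc.1.map Prod.fst := by
  rw [h.2, map_fst_addLife]

lemma OneRootFewer.map_step (h : OneRootFewer acc acc') (x : ℝ × ℕ) :
    OneRootFewer (step acc x) (step acc' x) := by
  obtain ⟨s, r⟩ := acc'
  obtain ⟨s', r'⟩ := acc
  obtain ⟨rfl, rfl⟩ := h
  simp [OneRootFewer, step_add_roots s r 1 x]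

lemma ExtraLifeAt.map_step (hnd : (acc.1.map Prod.fst).Nodup) (hx : x.1 ∉ acc.1.map Prod.fst)
    (h : ExtraLifeAt q acc acc') :
    (∃ q', q' ≤ q ∧ (q' = q ∨ q < x.1 ∧ ∀ c, AliveBelow acc.1 x.1 c → c ≤ q') ∧
        ExtraLifeAt q' (step acc x) (step acc' x)) ∨
      (q < x.1 ∧ (∀ c, ¬ AliveBelow acc.1 x.1 c) ∧ OneRootFewer (step acc x) (step acc' x)) := by
  obtain ⟨s, r⟩ := acc
  obtain ⟨hq, rfl⟩ := h
  have hxq : x.1 ≠ q := fun h => hx (h ▸ hq)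
  rcases step_spec s r x with ⟨h₀, hstep⟩ | ⟨c, hc, hstep⟩
  · rcases lt_or_gt_of_ne hxq with hxq | hqx
    · refine Or.inl ⟨q, le_rfl, Or.inl rfl, ?_, ?_⟩
      · simpa [hstep] using Or.inr hq
      · rw [hstep, step_addLife_of_root_of_gt hnd hq h₀ hxq]
    · refine Or.inr ⟨hqx, h₀, ?_, ?_⟩ <;>
        simp [hstep, step_addLife_of_root_of_lt hnd hq h₀ hqx]
  · rw [hstep]
    by_cases hslide : c < q ∧ q < x.1
    · obtain ⟨l, hcl, -, -⟩ := hc.1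
      refine Or.inl ⟨c, hslide.1.le, Or.inr ⟨hslide.2, hc.2⟩, ?_, ?_⟩
      · simpa [map_fst_decrementAt] using Or.inr (List.mem_map_of_mem (f := Prod.fst) hcl)
      · rw [step_addLife_of_attach_of_lt hnd hq hc hslide.1 hslide.2]
    · refine Or.inl ⟨q, le_rfl, Or.inl rfl, ?_, ?_⟩
      · simpa [map_fst_decrementAt] using Or.inr hq
      · rw [step_addLife_of_attach hnd hq hx hc fun hqx => not_lt.1 fun hcq => hslide ⟨hcq, hqx⟩]

lemma ExtraLifeAt.aliveBelow (hnd : (acc.1.map Prod.fst).Nodup) (h : ExtraLifeAt q acc acc')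
    (hqx : q < x.1) : AliveBelow acc'.1 x.1 q := by
  rw [h.2]
  exact (aliveBelow_addLife_iff hnd h.1 x.1).2 (Or.inr ⟨rfl, hqx⟩)

lemma PairCoupling.map_step (hnd : (A.1.map Prod.fst).Nodup) (hx : x.1 ∉ A.1.map Prod.fst)
    (h : PairCoupling A B) : PairCoupling (step A x) (step B x) := by
  rcases h with ⟨q, h⟩ | h
  · rcases h.map_step hnd hx with ⟨q', -, -, h'⟩ | ⟨-, -, h'⟩
    exacts [Or.inl ⟨q', h'⟩, Or.inr h']
  · exact Or.inr (h.map_step x)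

/-- The second surplus life can only save a root once the first one has. -/
lemma TripleCoupling.map_step (hnd : (A.1.map Prod.fst).Nodup) (hx : x.1 ∉ A.1.map Prod.fst)
    (h : TripleCoupling A B C) : TripleCoupling (step A x) (step B x) (step C x) := by
  rcases h with ⟨q₁, q₂, h₁₂, hAB, hBC⟩ | ⟨hAB, hBC⟩
  · have hndB : (B.1.map Prod.fst).Nodup := by rwa [hAB.map_fst]
    have hxB : x.1 ∉ B.1.map Prod.fst := by rwa [hAB.map_fst]
    have hq₁ : q₁ < x.1 → AliveBelow B.1 x.1 q₁ := hAB.aliveBelow hnd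
    rcases hBC.map_step hndB hxB with ⟨q₂', -, hslide, hBC'⟩ | ⟨hq₂x, h₀, -⟩
    · rcases hAB.map_step hnd hx with ⟨q₁', hq₁', -, hAB'⟩ | ⟨-, -, hAB'⟩
      · refine Or.inl ⟨q₁', q₂', ?_, hAB', hBC'⟩
        rcases hslide with rfl | ⟨hq₂x, hmax⟩
        · exact hq₁'.trans h₁₂
        · exact hq₁'.trans (hmax q₁ (hq₁ (h₁₂.trans_lt hq₂x)))
      · exact Or.inr ⟨hAB', Or.inl ⟨q₂', hBC'⟩⟩
    · exact absurd (hq₁ (h₁₂.trans_lt hq₂x)) (h₀ q₁)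
  · rw [← hAB.1] at hnd hx
    exact Or.inr ⟨hAB.map_step x, hBC.map_step hnd hx⟩

lemma TripleCoupling.foldl_step (its : List (ℝ × ℕ))
    (hnd : (its.map Prod.fst ++ A.1.map Prod.fst).Nodup) (h : TripleCoupling A B C) :
    TripleCoupling (its.foldl step A) (its.foldl step B) (its.foldl step C) := by
  induction its generalizing A B C with
  | nil => exact h
  | cons x its ih =>
    rw [List.map_cons, List.cons_append, List.nodup_cons] at hnd
    refine ih ?_ (h.map_step hnd.2.of_append_right fun hx => hnd.1 (List.mem_append_right _ hx))
    rw [map_fst_step, List.nodup_middle, List.nodup_cons]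
    exact hnd

lemma TripleCoupling.roots (h : TripleCoupling A B C) : B.2 ≤ A.2 ∧ 2 * B.2 ≤ A.2 + C.2 := by
  rcases h with ⟨_, _, -, ⟨-, rfl⟩, ⟨-, rfl⟩⟩ | ⟨⟨-, hAB⟩, ⟨_, -, rfl⟩ | ⟨-, hBC⟩⟩
  all_goals omega

end Coupling

lemma map_fst_foldl_step (its : List (ℝ × ℕ)) (acc : List (ℝ × ℕ) × ℕ) :
    (its.foldl step acc).1.map Prod.fst = (its.map Prod.fst).reverse ++ acc.1.map Prod.fst := by
  induction its generalizing acc with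
  | nil => simp
  | cons x its ih => simp [ih, map_fst_step]

lemma exists_step_eq_cons (acc : List (ℝ × ℕ) × ℕ) (x : ℝ) :
    ∃ S r, S.map Prod.fst = acc.1.map Prod.fst ∧ ∀ m, step acc (x, m) = ((x, m) :: S, r) := by
  rcases step_spec acc.1 acc.2 (x, 0) with ⟨h₀, -⟩ | ⟨c, hc, -⟩
  · exact ⟨acc.1, acc.2 + 1, rfl, fun m => step_eq_root (x := (x, m)) h₀⟩
  · exact ⟨decrementAt acc.1 c, acc.2, map_fst_decrementAt _ _,
      fun m => step_eq_attach (x := (x, m)) hc⟩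

theorem R_lives_convex (pre post : List (ℝ × ℕ)) (x : ℝ)
    (hnd : (pre.map Prod.fst ++ x :: post.map Prod.fst).Nodup) (m : ℕ) :
    R (pre ++ (x, m + 1) :: post) ≤ R (pre ++ (x, m) :: post) ∧
      2 * R (pre ++ (x, m + 1) :: post) ≤
        R (pre ++ (x, m) :: post) + R (pre ++ (x, m + 2) :: post) := by
  obtain ⟨S, r, hS, hstep⟩ := exists_step_eq_cons (pre.foldl step ([], 0)) x
  have hR : ∀ k, R (pre ++ (x, k) :: post) = (post.foldl step ((x, k) :: S, r)).2 := fun k => by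
    simp [R, run, List.foldl_append, hstep]
  have hstart : TripleCoupling ((x, m) :: S, r) ((x, m + 1) :: S, r) ((x, m + 2) :: S, r) :=
    Or.inl ⟨x, x, le_rfl, ⟨List.mem_cons_self, by simp [addLife]⟩,
      ⟨List.mem_cons_self, by simp [addLife]⟩⟩
  have hnd' : (post.map Prod.fst ++ ((x, m) :: S).map Prod.fst).Nodup := by
    rw [List.map_cons, hS, map_fst_foldl_step]
    refine (List.Perm.nodup_iff ?_).1 hnd
    simp only [List.map_nil, List.append_nil]
    have hperm : (pre.map Prod.fst ++ post.map Prod.fst).Perm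
        (post.map Prod.fst ++ (pre.map Prod.fst).reverse) :=
      List.perm_append_comm.trans ((List.reverse_perm _).symm.append_left _)
    exact List.perm_middle.trans ((hperm.cons x).trans List.perm_middle.symm)
  rw [hR, hR, hR]
  exact (hstart.foldl_step post hnd').roots

lemma exists_finRange_map_eq_append {n : ℕ} (u : Fin n → ℝ) (huinj : Function.Injective u)
    (i₀ : Fin n) (v : Fin n → ℕ) :
    ∃ pre post : List (ℝ × ℕ), (pre.map Prod.fst ++ u i₀ :: post.map Prod.fst).Nodup ∧
      ∀ m, (List.finRange n).map (fun i => (u i, if i = i₀ then m else v i)) =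
        pre ++ (u i₀, m) :: post := by
  obtain ⟨pre, post, hsplit⟩ := List.append_of_mem (List.mem_finRange i₀)
  have hnd : (pre ++ i₀ :: post).Nodup := hsplit ▸ List.nodup_finRange n
  have hi₀ : i₀ ∉ pre ++ post := (List.nodup_cons.1 (List.nodup_middle.1 hnd)).1
  refine ⟨pre.map fun i => (u i, v i), post.map fun i => (u i, v i), ?_, fun m => ?_⟩
  · simpa [Function.comp_def] using hnd.map huinj
  · rw [hsplit, List.map_append, List.map_cons, if_pos rfl]
    congr 1
    · refine List.map_congr_left fun i hi => ?_
      rw [if_neg (fun h : i = i₀ => hi₀ (List.mem_append_left _ (h ▸ hi)))]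
    · refine congrArg _ (List.map_congr_left fun i hi => ?_)
      rw [if_neg (fun h : i = i₀ => hi₀ (List.mem_append_right _ (h ▸ hi)))]

lemma secant_le_of_convex {f : ℕ → ℝ} (hf : ∀ m, 2 * f (m + 1) ≤ f m + f (m + 2))
    (ℓ k : ℕ) : f ℓ + ((k : ℝ) - ℓ) * (f (ℓ + 1) - f ℓ) ≤ f k := by
  have hslope : Monotone fun m => f (m + 1) - f m :=
    monotone_nat_of_le_succ fun m => by linarith [hf m]
  rcases le_total ℓ k with hk | hk
  · induction k, hk using Nat.le_induction with
    | base => simp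
    | succ k hk ih =>
      have := hslope hk
      push_cast
      linarith
  · induction hk using Nat.decreasingInduction with
    | self => simp
    | of_succ k hk ih =>
      have := hslope hk.le
      push_cast at ih
      linarith

lemma integrable_natCast_of_lintegral_ne_top {μ : Measure ℕ} (h : ∫⁻ k, (k : ℝ≥0∞) ∂μ ≠ ⊤) :
    Integrable (fun k : ℕ => (k : ℝ)) μ := by
  simpa using integrable_toReal_of_lintegral_ne_top measurable_from_nat.aemeasurable h

lemma integral_natCast_eq_toReal_lintegral (μ : Measure ℕ) :
    ∫ k, (k : ℝ) ∂μ = (∫⁻ k, (k : ℝ≥0∞) ∂μ).toReal := by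
  simpa using integral_toReal (μ := μ) measurable_from_nat.aemeasurable
    (ae_of_all _ fun k => ENNReal.natCast_lt_top k)

lemma integral_le_integral_of_convex {μ μ' : Measure ℕ} [IsProbabilityMeasure μ]
    [IsProbabilityMeasure μ'] {f : ℕ → ℝ} (hf : ∀ m, 2 * f (m + 1) ≤ f m + f (m + 2))
    (hfμ : Integrable f μ) (hid : Integrable (fun k : ℕ => (k : ℝ)) μ)
    (hid' : Integrable (fun k : ℕ => (k : ℝ)) μ')
    (hmean : ∫ k, (k : ℝ) ∂μ = ∫ k, (k : ℝ) ∂μ') {ℓ : ℕ} (hsupp : ∀ᵐ k ∂μ', k = ℓ ∨ k = ℓ + 1) :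
    ∫ k, f k ∂μ' ≤ ∫ k, f k ∂μ := by
  set a := f ℓ - ℓ * (f (ℓ + 1) - f ℓ)
  set b := f (ℓ + 1) - f ℓ
  have hsecant : ∀ k : ℕ, a + k * b ≤ f k := fun k => by
    have := secant_le_of_convex hf ℓ k
    linarith
  have hsecant_eq : ∀ᵐ k ∂μ', f k = a + k * b := hsupp.mono fun k hk => by
    rcases hk with rfl | rfl
    · ring
    · push_cast; ring
  have integral_secant : ∀ (ν : Measure ℕ) [IsProbabilityMeasure ν],
      Integrable (fun k : ℕ => (k : ℝ)) ν → ∫ k, (a + k * b) ∂ν = a + (∫ k, (k : ℝ) ∂ν) * b :=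
    fun ν _ hν => by
      rw [integral_add (integrable_const a) (hν.mul_const b), integral_const, integral_mul_const]
      simp
  calc ∫ k, f k ∂μ' = ∫ k, (a + k * b) ∂μ' := integral_congr_ae hsecant_eq
    _ = ∫ k, (a + k * b) ∂μ := by rw [integral_secant μ' hid', integral_secant μ hid, hmean]
    _ ≤ ∫ k, f k ∂μ :=
        integral_mono ((integrable_const a).add (hid.mul_const b)) hfμ hsecant

theorem single_random_life_comparison_general
    (μ μ' : Measure ℕ) [IsProbabilityMeasure μ] [IsProbabilityMeasure μ']
    (hfin : ∫⁻ k, (k : ℝ≥0∞) ∂μ ≠ ⊤)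
    (hmean : ∫⁻ k, (k : ℝ≥0∞) ∂μ = ∫⁻ k, (k : ℝ≥0∞) ∂μ')
    (ℓ : ℕ) (hsupp : ∀ i : ℕ, i ≠ ℓ → i ≠ ℓ + 1 → μ' {i} = 0)
    (n : ℕ) (u : Fin n → ℝ)
    (huinj : Function.Injective u)
    (i₀ : Fin n) (v : Fin n → ℕ)
    (Rm : ℕ → ℕ)
    (hRm : ∀ m : ℕ,
      Rm m = R ((List.finRange n).map fun i => (u i, if i = i₀ then m else v i))) :
    ∫ k, (Rm k : ℝ) ∂μ' ≤ ∫ k, (Rm k : ℝ) ∂μ := by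
  obtain ⟨pre, post, hnd, hsplit⟩ := exists_finRange_map_eq_append u huinj i₀ v
  have hconv : ∀ m, Rm (m + 1) ≤ Rm m ∧ 2 * Rm (m + 1) ≤ Rm m + Rm (m + 2) := by
    simpa only [hRm, hsplit] using R_lives_convex pre post (u i₀) hnd
  have hbdd : ∀ k, Rm k ≤ Rm 0 := fun k =>
    (antitone_nat_of_succ_le fun m => (hconv m).1) k.zero_le
  refine integral_le_integral_of_convex (ℓ := ℓ) (fun m => by exact_mod_cast (hconv m).2)
    (Integrable.of_bound measurable_from_nat.aestronglyMeasurable (Rm 0)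
      (ae_of_all _ fun k => by simpa using hbdd k))
    (integrable_natCast_of_lintegral_ne_top hfin)
    (integrable_natCast_of_lintegral_ne_top (hmean ▸ hfin))
    (by rw [integral_natCast_eq_toReal_lintegral, integral_natCast_eq_toReal_lintegral, hmean])
    (ae_iff_of_countable.2 fun k hk => ?_)
  by_contra h
  exact hk (hsupp k (not_or.1 h).1 (not_or.1 h).2)

/-- Single random item comparison: if `μ` and `μ'` have the same mean and `μ'` is
supported on two consecutive integers, then `E[R_ν'] ≤ E[R_ν]`. -/
theorem single_random_life_comparison
    (μ μ' : Measure ℕ) [IsProbabilityMeasure μ] [IsProbabilityMeasure μ']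
    (hμ0 : μ {0} = 0) (hμ'0 : μ' {0} = 0)
    (hfin : ∫⁻ k, (k : ℝ≥0∞) ∂μ ≠ ⊤)
    (hmean : ∫⁻ k, (k : ℝ≥0∞) ∂μ = ∫⁻ k, (k : ℝ≥0∞) ∂μ')
    (ℓ : ℕ) (hℓ : 1 ≤ ℓ) (hsupp : ∀ i : ℕ, i ≠ ℓ → i ≠ ℓ + 1 → μ' {i} = 0)
    (n : ℕ) (hn : 1 ≤ n) (u : Fin n → ℝ)
    (hu : ∀ i, u i ∈ Set.Ioo (0 : ℝ) 1) (huinj : Function.Injective u)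
    (i₀ : Fin n) (v : Fin n → ℕ) (hv : ∀ i, i ≠ i₀ → 1 ≤ v i)
    (Rm : ℕ → ℕ)
    (hRm : ∀ m : ℕ,
      Rm m = R ((List.finRange n).map fun i => (u i, if i = i₀ then m else v i))) :
    ∫ k, (Rm k : ℝ) ∂μ' ≤ ∫ k, (Rm k : ℝ) ∂μ :=
  single_random_life_comparison_general μ μ' hfin hmean ℓ hsupp n u huinj i₀ v Rm hRm

end HeapPatience
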